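/- Fix ε ∈ (0,1], γ > 0 and p ∈ (1/2,1); write q = 1−p and Δ₁(p) = Φ(√(q/p)) − q. (a) If C ≥ 0 is such that for every n ∈ ℕ and all independent random variables X_1,…,X_n with E X_k = 0, E X_k² < ∞ and B_n² = Σ_k E X_k² > 0 one has Δ_n ≤ C·sup_{0<z<ε}( γ·|M_n(z)| + z·L_n(z) ), then C ≥ Δ₁(p)/ε when p ≤ 1/(ε²+1), and C ≥ Δ₁(p)/max{ √(q/p), γ·√(q³/p) + ε·p } when p > 1/(ε²+1). (b) If instead Δ_n ≤ C·( γ·|M_n(ε)| + sup_{0<z<ε} z·L_n(z) ) for all such n and X_1,…,X_n, then C ≥ Δ₁(p)/ε when p ≤ 1/(ε²+1), and C ≥ Δ₁(p)/( γ·√(q³/p) + max{ √(q/p), ε·p } ) when p > 1/(ε²+1). -/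

import Mathlib

open MeasureTheory ProbabilityTheory Real Set

/-- The standard normal distribution function. -/
noncomputable def Phi (x : ℝ) : ℝ :=
  ∫ t in Set.Iic x, Real.exp (-t ^ 2 / 2) / Real.sqrt (2 * Real.pi)

/-- `B_n = sqrt (Σ E X_k²)`. -/
noncomputable def Bn {Ω : Type} [MeasurableSpace Ω] (μ : Measure Ω) {n : ℕ}
    (X : Fin n → Ω → ℝ) : ℝ :=
  Real.sqrt (∑ k, ∫ ω, (X k ω) ^ 2 ∂μ)

/-- Uniform distance between the d.f. of the normalized sum and the standard normal d.f. -/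
noncomputable def Deltan {Ω : Type} [MeasurableSpace Ω] (μ : Measure Ω) {n : ℕ}
    (X : Fin n → Ω → ℝ) : ℝ :=
  ⨆ x : ℝ, |(μ {ω | (∑ k, X k ω) / Bn μ X < x}).toReal - Phi x|

/-- `M_n(z) = B_n⁻³ Σ E[X_k³ 1_{|X_k| < z B_n}]`. -/
noncomputable def Mn {Ω : Type} [MeasurableSpace Ω] (μ : Measure Ω) {n : ℕ}
    (X : Fin n → Ω → ℝ) (z : ℝ) : ℝ :=
  (∑ k, ∫ ω, (if |X k ω| < z * Bn μ X then (X k ω) ^ 3 else 0) ∂μ) / (Bn μ X) ^ 3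

/-- `L_n(z) = B_n⁻² Σ E[X_k² 1_{|X_k| ≥ z B_n}]` (the Lindeberg fraction). -/
noncomputable def Lnn {Ω : Type} [MeasurableSpace Ω] (μ : Measure Ω) {n : ℕ}
    (X : Fin n → Ω → ℝ) (z : ℝ) : ℝ :=
  (∑ k, ∫ ω, (if z * Bn μ X ≤ |X k ω| then (X k ω) ^ 2 else 0) ∂μ) / (Bn μ X) ^ 2

/-- Hypotheses on the independent summands: measurability, independence, zero means,
finite second moments, positive total variance. -/
def GoodFamily {Ω : Type} [MeasurableSpace Ω] (μ : Measure Ω) {n : ℕ}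
    (X : Fin n → Ω → ℝ) : Prop :=
  (∀ k, Measurable (X k)) ∧
  iIndepFun X μ ∧
  (∀ k, Integrable (fun ω => (X k ω) ^ 2) μ) ∧
  (∀ k, ∫ ω, X k ω ∂μ = 0) ∧
  0 < ∑ k, ∫ ω, (X k ω) ^ 2 ∂μ

/-!
A single summand already forces the bounds. Let `X` take the value `√(q/p)` with probability `p`
and `-√(p/q)` with probability `q`, so that `E X = 0` and `E X² = 1`. Its distribution function
equals `q` just below `√(q/p)`, hence `Δ₁ ≥ Φ(√(q/p)) - q`. For `0 < z ≤ √(q/p)` both atoms are cut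
off in `M₁(z)` and kept in `L₁(z)`, so `M₁(z) = 0` and `L₁(z) = 1`; for `√(q/p) < z ≤ 1 < √(p/q)`
only the positive atom enters `M₁(z) = √(q³/p)` and only the negative one enters `L₁(z) = p`.
The right-hand sides are therefore at most the stated denominators, the case split
`ε ≤ √(q/p)` being exactly `p ≤ 1/(ε² + 1)`.
-/

open unitInterval

lemma Phi_nonneg (x : ℝ) : 0 ≤ Phi x :=
  setIntegral_nonneg measurableSet_Iic fun _ _ => by positivity

lemma integral_gaussian_density :
    ∫ t : ℝ, exp (-t ^ 2 / 2) / √(2 * π) = 1 := by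
  have h : (fun t : ℝ => exp (-t ^ 2 / 2)) = fun t => exp (-(1 / 2) * t ^ 2) := by
    funext t; ring_nf
  rw [integral_div, h, integral_gaussian, show π / (1 / 2) = 2 * π by ring]
  exact div_self (sqrt_ne_zero'.2 (by positivity))

lemma Phi_le_one (x : ℝ) : Phi x ≤ 1 := by
  have hint : Integrable fun t : ℝ => exp (-t ^ 2 / 2) / √(2 * π) := by
    simpa [neg_div, div_eq_inv_mul] using
      ((integrable_exp_neg_mul_sq (b := 1 / 2) (by norm_num)).div_const (√(2 * π)))
  calc Phi x ≤ ∫ t : ℝ, exp (-t ^ 2 / 2) / √(2 * π) :=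
        setIntegral_le_integral hint (.of_forall fun _ => by positivity)
    _ = 1 := integral_gaussian_density

lemma abs_sub_Phi_le_Deltan {Ω : Type} [MeasurableSpace Ω] (μ : Measure Ω)
    [IsProbabilityMeasure μ] {n : ℕ} (X : Fin n → Ω → ℝ) (x : ℝ) :
    |(μ {ω | (∑ k, X k ω) / Bn μ X < x}).toReal - Phi x| ≤ Deltan μ X := by
  refine le_ciSup (f := fun x => |(μ {ω | (∑ k, X k ω) / Bn μ X < x}).toReal - Phi x|)
    ⟨1, ?_⟩ x
  rintro _ ⟨y, rfl⟩
  exact abs_sub_le_of_nonneg_of_le ENNReal.toReal_nonneg measureReal_le_one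
    (Phi_nonneg y) (Phi_le_one y)

section SingleSummand

variable {μ : Measure ℝ}

lemma Bn_single (h : ∫ x, x ^ 2 ∂μ = 1) : Bn μ (fun _ : Fin 1 => id) = 1 := by
  simp [Bn, h]

lemma Mn_single (h : ∫ x, x ^ 2 ∂μ = 1) (z : ℝ) :
    Mn μ (fun _ : Fin 1 => id) z = ∫ x, (if |x| < z then x ^ 3 else 0) ∂μ := by
  simp [Mn, Bn_single h]

lemma Lnn_single (h : ∫ x, x ^ 2 ∂μ = 1) (z : ℝ) :
    Lnn μ (fun _ : Fin 1 => id) z = ∫ x, (if z ≤ |x| then x ^ 2 else 0) ∂μ := by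
  simp [Lnn, Bn_single h]

lemma goodFamily_single [IsProbabilityMeasure μ] (hint : Integrable (fun x => x ^ 2) μ)
    (h₁ : ∫ x, x ∂μ = 0) (h₂ : ∫ x, x ^ 2 ∂μ = 1) : GoodFamily μ (fun _ : Fin 1 => id) :=
  ⟨fun _ => measurable_id, iIndepFun.of_subsingleton, fun _ => hint, fun _ => h₁,
    by simp [h₂]⟩

lemma abs_measureReal_Iio_sub_Phi_le_Deltan_single [IsProbabilityMeasure μ]
    (h : ∫ x, x ^ 2 ∂μ = 1) (x : ℝ) :
    |μ.real (Iio x) - Phi x| ≤ Deltan μ (fun _ : Fin 1 => id) := by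
  simpa [Bn_single h, measureReal_def, Set.Iio_def] using
    abs_sub_Phi_le_Deltan μ (fun _ : Fin 1 => id) x

end SingleSummand

lemma mul_sqrt_div_comm {p q : ℝ} (hp : 0 ≤ p) (hq : 0 ≤ q) :
    p * √(q / p) = q * √(p / q) := by
  rw [← sqrt_sq hp, ← sqrt_mul (sq_nonneg p), ← sqrt_sq hq, ← sqrt_mul (sq_nonneg q),
    sqrt_sq hp, sqrt_sq hq]
  rcases hp.eq_or_lt with rfl | hp'
  · simp
  rcases hq.eq_or_lt with rfl | hq'
  · simp
  congr 1; field_simp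

lemma mul_sq_sqrt_div {p q : ℝ} (hp : p ≠ 0) (hq : 0 ≤ q / p) : p * √(q / p) ^ 2 = q := by
  rw [sq_sqrt hq]; field_simp

lemma mul_sqrt_div_pow_three {p q : ℝ} (hp : 0 < p) (hq : 0 ≤ q) :
    p * √(q / p) ^ 3 = √(q ^ 3 / p) := by
  rw [pow_succ, ← mul_assoc, mul_sq_sqrt_div hp.ne' (by positivity),
    show q ^ 3 / p = q ^ 2 * (q / p) by ring, sqrt_mul (sq_nonneg q), sqrt_sq hq]

lemma le_sqrt_one_sub_div_iff {ε p : ℝ} (hε : 0 < ε) (hp : 0 < p) :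
    ε ≤ √((1 - p) / p) ↔ p ≤ 1 / (ε ^ 2 + 1) := by
  rw [le_sqrt' hε, le_div_iff₀ hp, le_div_iff₀ (by positivity)]
  constructor <;> intro <;> linarith

section StdBernoulli

noncomputable def stdBernoulli (p : I) : Measure ℝ :=
  Ber(√((1 - p) / p), -√(p / (1 - p)), p)

instance (p : I) : IsProbabilityMeasure (stdBernoulli p) := by
  rw [stdBernoulli]; infer_instance

variable {p : I}

lemma integral_id_stdBernoulli : ∫ x, x ∂stdBernoulli p = 0 := by
  rw [stdBernoulli, integral_bernoulliMeasure, smul_eq_mul, smul_eq_mul,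
    mul_sqrt_div_comm (nonneg p) (one_minus_nonneg p)]
  ring

lemma integral_sq_stdBernoulli (hp₀ : 0 < (p : ℝ)) (hp₁ : (p : ℝ) < 1) :
    ∫ x, x ^ 2 ∂stdBernoulli p = 1 := by
  rw [stdBernoulli, integral_bernoulliMeasure, smul_eq_mul, smul_eq_mul, neg_sq,
    mul_sq_sqrt_div hp₀.ne' (by have := one_minus_nonneg p; positivity),
    mul_sq_sqrt_div (by linarith) (by have := nonneg p; positivity)]
  ring

lemma Mn_stdBernoulli (hp₀ : 0 < (p : ℝ)) (hp₁ : (p : ℝ) < 1) {z : ℝ}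
    (hz : z ≤ √(p / (1 - p))) :
    Mn (stdBernoulli p) (fun _ : Fin 1 => id) z =
      if z ≤ √((1 - p) / p) then 0 else √((1 - p) ^ 3 / p) := by
  rw [Mn_single (integral_sq_stdBernoulli hp₀ hp₁), stdBernoulli, integral_bernoulliMeasure]
  simp only [abs_neg, abs_of_nonneg (sqrt_nonneg _), if_neg hz.not_gt, smul_eq_mul, mul_zero,
    add_zero]
  split_ifs with h₁ h₂ h₂
  · exact absurd h₁ h₂.not_gt
  · exact mul_sqrt_div_pow_three hp₀ (one_minus_nonneg p)
  · simp
  · exact absurd (not_lt.1 h₁) h₂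

lemma Lnn_stdBernoulli (hp₀ : 0 < (p : ℝ)) (hp₁ : (p : ℝ) < 1) {z : ℝ}
    (hz : z ≤ √(p / (1 - p))) :
    Lnn (stdBernoulli p) (fun _ : Fin 1 => id) z = if z ≤ √((1 - p) / p) then 1 else p := by
  have hsq := integral_sq_stdBernoulli hp₀ hp₁
  rw [Lnn_single hsq, stdBernoulli, integral_bernoulliMeasure]
  rw [stdBernoulli, integral_bernoulliMeasure] at hsq
  simp only [abs_neg, abs_of_nonneg (sqrt_nonneg _), if_pos hz, smul_eq_mul] at hsq ⊢
  split_ifs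
  · exact hsq
  · rw [neg_sq, mul_sq_sqrt_div (by linarith) (by have := nonneg p; positivity)]
    ring

lemma stdBernoulli_real_Iio (hp₀ : 0 < (p : ℝ)) (hp₁ : (p : ℝ) < 1) :
    (stdBernoulli p).real (Iio √((1 - p) / p)) = 1 - p :=
  bernoulliMeasure_real_apply_of_notMem_of_mem p measurableSet_Iio (lt_irrefl (√((1 - p) / p)))
    ((neg_nonpos.2 (sqrt_nonneg _)).trans_lt (sqrt_pos.2 (div_pos (by linarith) hp₀)))

variable {ε : ℝ}

lemma sSup_Mn_Lnn_stdBernoulli_le (hp₀ : 0 < (p : ℝ)) (hp₁ : (p : ℝ) < 1)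
    (hεb : ε ≤ √(p / (1 - p))) (γ : ℝ) (hε : 0 ≤ ε) (hεa : ε ≤ √((1 - p) / p)) :
    sSup ((fun z => γ * |Mn (stdBernoulli p) (fun _ : Fin 1 => id) z| +
      z * Lnn (stdBernoulli p) (fun _ : Fin 1 => id) z) '' Ioo 0 ε) ≤ ε := by
  refine Real.sSup_le (forall_mem_image.2 fun z hz => ?_) hε
  have hza : z ≤ √((1 - p) / p) := hz.2.le.trans hεa
  rw [Mn_stdBernoulli hp₀ hp₁ (hz.2.le.trans hεb), Lnn_stdBernoulli hp₀ hp₁ (hz.2.le.trans hεb),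
    if_pos hza, if_pos hza]
  simpa using hz.2.le

lemma sSup_Mn_Lnn_stdBernoulli_le_max (hp₀ : 0 < (p : ℝ)) (hp₁ : (p : ℝ) < 1)
    (hεb : ε ≤ √(p / (1 - p))) (γ : ℝ) :
    sSup ((fun z => γ * |Mn (stdBernoulli p) (fun _ : Fin 1 => id) z| +
      z * Lnn (stdBernoulli p) (fun _ : Fin 1 => id) z) '' Ioo 0 ε) ≤
      max √((1 - p) / p) (γ * √((1 - p) ^ 3 / p) + ε * p) := by
  refine Real.sSup_le (forall_mem_image.2 fun z hz => ?_)
    ((sqrt_nonneg _).trans (le_max_left _ _))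
  rw [Mn_stdBernoulli hp₀ hp₁ (hz.2.le.trans hεb), Lnn_stdBernoulli hp₀ hp₁ (hz.2.le.trans hεb)]
  split_ifs with hza
  · simpa using le_max_of_le_left hza
  · rw [abs_of_nonneg (sqrt_nonneg _)]
    exact le_max_of_le_right (by gcongr; exact hz.2.le)

lemma sSup_Lnn_stdBernoulli_le (hp₀ : 0 < (p : ℝ)) (hp₁ : (p : ℝ) < 1)
    (hεb : ε ≤ √(p / (1 - p))) (hε : 0 ≤ ε) :
    sSup ((fun z => z * Lnn (stdBernoulli p) (fun _ : Fin 1 => id) z) '' Ioo 0 ε) ≤ ε := by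
  refine Real.sSup_le (forall_mem_image.2 fun z hz => ?_) hε
  rw [Lnn_stdBernoulli hp₀ hp₁ (hz.2.le.trans hεb)]
  split_ifs
  · simpa using hz.2.le
  · nlinarith [hz.1, hz.2, le_one p]

lemma sSup_Lnn_stdBernoulli_le_max (hp₀ : 0 < (p : ℝ)) (hp₁ : (p : ℝ) < 1)
    (hεb : ε ≤ √(p / (1 - p))) :
    sSup ((fun z => z * Lnn (stdBernoulli p) (fun _ : Fin 1 => id) z) '' Ioo 0 ε) ≤
      max √((1 - p) / p) (ε * p) := by
  refine Real.sSup_le (forall_mem_image.2 fun z hz => ?_)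
    ((sqrt_nonneg _).trans (le_max_left _ _))
  rw [Lnn_stdBernoulli hp₀ hp₁ (hz.2.le.trans hεb)]
  split_ifs with hza
  · simpa using le_max_of_le_left hza
  · exact le_max_of_le_right (by gcongr; exact hz.2.le)

end StdBernoulli

theorem lower_bound_KE0_KR0 (ε γ : ℝ) (hε : ε ∈ Set.Ioc (0 : ℝ) 1) (hγ : 0 < γ)
    (p : ℝ) (hp : p ∈ Set.Ioo (1/2 : ℝ) 1) (q : ℝ) (hq : q = 1 - p) :
    (∀ C : ℝ, 0 ≤ C →
      (∀ (Ω : Type) (mΩ : MeasurableSpace Ω) (μ : Measure Ω), IsProbabilityMeasure μ →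
        ∀ (n : ℕ) (X : Fin n → Ω → ℝ), GoodFamily μ X →
          Deltan μ X ≤
            C * sSup ((fun z => γ * |Mn μ X z| + z * Lnn μ X z) '' Set.Ioo (0 : ℝ) ε)) →
      ((p ≤ 1 / (ε ^ 2 + 1) → (Phi (Real.sqrt (q / p)) - q) / ε ≤ C) ∧
       (1 / (ε ^ 2 + 1) < p →
        (Phi (Real.sqrt (q / p)) - q) /
          max (Real.sqrt (q / p)) (γ * Real.sqrt (q ^ 3 / p) + ε * p) ≤ C))) ∧
    (∀ C : ℝ, 0 ≤ C →
      (∀ (Ω : Type) (mΩ : MeasurableSpace Ω) (μ : Measure Ω), IsProbabilityMeasure μ →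
        ∀ (n : ℕ) (X : Fin n → Ω → ℝ), GoodFamily μ X →
          Deltan μ X ≤
            C * (γ * |Mn μ X ε| +
              sSup ((fun z => z * Lnn μ X z) '' Set.Ioo (0 : ℝ) ε))) →
      ((p ≤ 1 / (ε ^ 2 + 1) → (Phi (Real.sqrt (q / p)) - q) / ε ≤ C) ∧
       (1 / (ε ^ 2 + 1) < p →
        (Phi (Real.sqrt (q / p)) - q) /
          (γ * Real.sqrt (q ^ 3 / p) + max (Real.sqrt (q / p)) (ε * p)) ≤ C))) := by
  obtain ⟨hε₀, hε₁⟩ := hε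
  obtain ⟨hp₀, hp₁⟩ : 0 < p ∧ p < 1 := ⟨by linarith [hp.1], hp.2⟩
  obtain ⟨P, rfl⟩ : ∃ P : I, (P : ℝ) = p := ⟨⟨p, hp₀.le, hp₁.le⟩, rfl⟩
  subst hq
  have hεb : ε ≤ √(P / (1 - P)) :=
    hε₁.trans (one_le_sqrt.2 ((one_le_div (by linarith)).2 (by linarith [hp.1])))
  have hgood : GoodFamily (stdBernoulli P) (fun _ : Fin 1 => id) :=
    goodFamily_single (integrable_bernoulliMeasure _ _ _ _) integral_id_stdBernoulli
      (integral_sq_stdBernoulli hp₀ hp₁)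
  have hΔ : Phi √((1 - P) / P) - (1 - P) ≤ Deltan (stdBernoulli P) (fun _ : Fin 1 => id) := by
    have h := abs_measureReal_Iio_sub_Phi_le_Deltan_single (integral_sq_stdBernoulli hp₀ hp₁)
      √((1 - P) / P)
    rw [stdBernoulli_real_Iio hp₀ hp₁, abs_sub_comm] at h
    exact (le_abs_self _).trans h
  have conclude {C S D : ℝ} (hC : 0 ≤ C) (hD : 0 ≤ D)
      (hK : Deltan (stdBernoulli P) (fun _ : Fin 1 => id) ≤ C * S) (hSD : S ≤ D) :
      (Phi √((1 - P) / P) - (1 - P)) / D ≤ C :=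
    div_le_of_le_mul₀ hD hC (hΔ.trans (hK.trans (mul_le_mul_of_nonneg_left hSD hC)))
  have hεa := le_sqrt_one_sub_div_iff hε₀ hp₀
  refine ⟨fun C hC hK => ⟨fun h => ?_, fun h => ?_⟩, fun C hC hK => ⟨fun h => ?_, fun h => ?_⟩⟩
  · exact conclude hC hε₀.le (hK ℝ _ _ inferInstance 1 _ hgood)
      (sSup_Mn_Lnn_stdBernoulli_le hp₀ hp₁ hεb γ hε₀.le (hεa.2 h))
  · exact conclude hC ((sqrt_nonneg _).trans (le_max_left _ _)) (hK ℝ _ _ inferInstance 1 _ hgood)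
      (sSup_Mn_Lnn_stdBernoulli_le_max hp₀ hp₁ hεb γ)
  · refine conclude hC hε₀.le (hK ℝ _ _ inferInstance 1 _ hgood) ?_
    rw [Mn_stdBernoulli hp₀ hp₁ hεb, if_pos (hεa.2 h), abs_zero, mul_zero, zero_add]
    exact sSup_Lnn_stdBernoulli_le hp₀ hp₁ hεb hε₀.le
  · refine conclude hC (by positivity) (hK ℝ _ _ inferInstance 1 _ hgood) ?_
    rw [Mn_stdBernoulli hp₀ hp₁ hεb, if_neg (mt hεa.1 h.not_ge), abs_of_nonneg (sqrt_nonneg _)]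
    exact add_le_add_right (sSup_Lnn_stdBernoulli_le_max hp₀ hp₁ hεb) _
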